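/- arXiv:2512.17341 — 5 statements merged into one kernel-verified Lean document; each statement's English description precedes it below -/
import Mathlib

section
/- Fix $m\in\mathbb{N}$ and a measurable partition $B_1,\dots,B_m$ of a space $\mathcal{X}$. For $\lambda\in\{-1,+1\}^{m/2}$ define $\Delta(\lambda,x)=\sum_{i=1}^{m/2}\lambda_i(\mathbf{1}\{x\in B_{2i-1}\}-\mathbf{1}\{x\in B_{2i}\})$. Let $\hat m,\hat g(0,\cdot),\hat g(1,\cdot):\mathcal{X}\to[0,1]$, let $\epsilon_m,\epsilon_g>0$, and define $m_\lambda(x)=\hat m(x)+\epsilon_m\Delta(\lambda,x)$, $g_\lambda(0,x)=\hat g(0,x)+\epsilon_g\Delta(\lambda,x)(1-\hat m(x)+\epsilon_m\Delta(\lambda,x))$, $g_\lambda(1,x)=\hat g(1,x)+\epsilon_g\Delta(\lambda,x)(\hat m(x)-\epsilon_m\Delta(\lambda,x))$, and the density $p_\lambda(x,d,y)=m_\lambda(x)^d(1-m_\lambda(x))^{1-d}g_\lambda(d,x)^y(1-g_\lambda(d,x))^{1-y}$ for $(d,y)\in\{0,1\}^2$. If $\pi$ is the uniform distribution on $\{-1,+1\}^{m/2}$,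 then for every $(x,d,y)$ the mixture satisfies $\int p_\lambda(x,d,y)\,d\pi(\lambda)=\hat p(x,d,y)$, where $\hat p$ is defined analogously from $(\hat m,\hat g)$. -/
open MeasureTheory

/-- The mixture of the perturbed ATE densities over uniformly random sign vectors
equals the anchor density. -/
theorem stmt_2 {X : Type*} (k : ℕ) (B : Fin (2 * k) → Set X)
    (hdisj : Pairwise (Function.onFun Disjoint B))
    (hcover : (⋃ j, B j) = Set.univ)
    (mhat : X → ℝ) (ghat : ℕ → X → ℝ) (εm εg : ℝ)
    (hεm : 0 < εm) (hεg : 0 < εg)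
    (Δ : (Fin k → ℝ) → X → ℝ)
    (hΔ : ∀ lam x, Δ lam x = ∑ i : Fin k, lam i *
      ((B ⟨2 * i.1, by omega⟩).indicator (fun _ => (1 : ℝ)) x
        - (B ⟨2 * i.1 + 1, by omega⟩).indicator (fun _ => (1 : ℝ)) x))
    (mlam : (Fin k → ℝ) → X → ℝ) (glam : (Fin k → ℝ) → ℕ → X → ℝ)
    (hmlam : ∀ lam x, mlam lam x = mhat x + εm * Δ lam x)
    (hglam0 : ∀ lam x, glam lam 0 x
      = ghat 0 x + εg * Δ lam x * (1 - mhat x + εm * Δ lam x))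
    (hglam1 : ∀ lam x, glam lam 1 x
      = ghat 1 x + εg * Δ lam x * (mhat x - εm * Δ lam x))
    (plam : (Fin k → ℝ) → X → ℕ → ℕ → ℝ) (phat : X → ℕ → ℕ → ℝ)
    (hplam : ∀ lam x d y, plam lam x d y
      = (mlam lam x) ^ d * (1 - mlam lam x) ^ (1 - d)
        * (glam lam d x) ^ y * (1 - glam lam d x) ^ (1 - y))
    (hphat : ∀ x d y, phat x d y
      = (mhat x) ^ d * (1 - mhat x) ^ (1 - d)
        * (ghat d x) ^ y * (1 - ghat d x) ^ (1 - y)) :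
    ∀ (x : X) (d y : ℕ), d ≤ 1 → y ≤ 1 →
      (∑ lam : Fin k → Bool,
          plam (fun i => if lam i then (1 : ℝ) else -1) x d y) / 2 ^ k
        = phat x d y := by
  intro x d y hd hy
  obtain ⟨j, hj⟩ : ∃ j, x ∈ B j := by
    have : x ∈ ⋃ j, B j := hcover ▸ Set.mem_univ x
    simpa using this
  have hnot : ∀ j' : Fin (2 * k), j' ≠ j → x ∉ B j' := by
    intro j' hne hx'
    exact (Set.disjoint_left.mp (hdisj hne)) hx' hj
  have hk : 0 < k := by
    have := j.isLt; omega
  have hjlt := j.isLt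
  set i0 : Fin k := ⟨j.1 / 2, by omega⟩ with hi0def
  set s : ℝ := if j.1 % 2 = 0 then 1 else -1 with hsdef
  -- Δ of a sign vector only depends on coordinate i0
  have hΔx : ∀ l : Fin k → ℝ, Δ l x = s * l i0 := by
    intro l
    rw [hΔ]
    rw [Finset.sum_eq_single i0]
    · by_cases hpar : j.1 % 2 = 0
      · have h1 : (⟨2 * i0.1, by omega⟩ : Fin (2 * k)) = j := by
          apply Fin.ext; simp [hi0def]; omega
        have h2 : (⟨2 * i0.1 + 1, by omega⟩ : Fin (2 * k)) ≠ j := by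
          apply Fin.ne_of_val_ne; simp [hi0def]; omega
        rw [h1, Set.indicator_of_mem hj, Set.indicator_of_notMem (hnot _ h2)]
        simp [hsdef, hpar]
      · have h1 : (⟨2 * i0.1, by omega⟩ : Fin (2 * k)) ≠ j := by
          apply Fin.ne_of_val_ne; simp [hi0def]; omega
        have h2 : (⟨2 * i0.1 + 1, by omega⟩ : Fin (2 * k)) = j := by
          apply Fin.ext; simp [hi0def]; omega
        rw [h2, Set.indicator_of_mem hj, Set.indicator_of_notMem (hnot _ h1)]
        simp [hsdef, hpar]
    · intro i _ hne
      have hne' : i.1 ≠ j.1 / 2 := by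
        intro h; exact hne (Fin.ext (by simp [hi0def, h]))
      have h1 : (⟨2 * i.1, by omega⟩ : Fin (2 * k)) ≠ j := by
        apply Fin.ne_of_val_ne; simp; omega
      have h2 : (⟨2 * i.1 + 1, by omega⟩ : Fin (2 * k)) ≠ j := by
        apply Fin.ne_of_val_ne; simp; omega
      rw [Set.indicator_of_notMem (hnot _ h1), Set.indicator_of_notMem (hnot _ h2)]
      ring
    · intro h; exact absurd (Finset.mem_univ i0) h
  -- the density as a function of Δ
  set F : ℝ → ℝ := fun t =>
    (mhat x + εm * t) ^ d * (1 - (mhat x + εm * t)) ^ (1 - d)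
      * ((if d = 0 then ghat 0 x + εg * t * (1 - mhat x + εm * t)
          else ghat 1 x + εg * t * (mhat x - εm * t))) ^ y
      * (1 - (if d = 0 then ghat 0 x + εg * t * (1 - mhat x + εm * t)
          else ghat 1 x + εg * t * (mhat x - εm * t))) ^ (1 - y) with hFdef
  have hplamF : ∀ l : Fin k → ℝ, plam l x d y = F (Δ l x) := by
    intro l
    rw [hplam, hmlam]
    interval_cases d
    · rw [hglam0 l x]; simp [hFdef]
    · rw [hglam1 l x]; simp [hFdef]
  -- rewrite each summand using the i0 coordinate
  have hsummand : ∀ b : Fin k → Bool,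
      plam (fun i => if b i then (1 : ℝ) else -1) x d y
        = F (s * (if b i0 then (1 : ℝ) else -1)) := by
    intro b
    rw [hplamF, hΔx]
  calc (∑ lam : Fin k → Bool,
          plam (fun i => if lam i then (1 : ℝ) else -1) x d y) / 2 ^ k
      = (∑ lam : Fin k → Bool,
          F (s * (if lam i0 then (1 : ℝ) else -1))) / 2 ^ k := by
        rw [Finset.sum_congr rfl (fun b _ => hsummand b)]
    _ = ((2 : ℝ) ^ (k - 1) * (F s + F (-s))) / 2 ^ k := by
        have hc1 : Fintype.card {i : Fin k // i ≠ i0} = k - 1 := by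
          simp [Fintype.card_subtype_compl, Fintype.card_subtype_eq]
        have hcard : Fintype.card ({i : Fin k // i ≠ i0} → Bool) = 2 ^ (k - 1) := by
          rw [Fintype.card_fun, hc1, Fintype.card_bool]
        have hsum : ∀ G : Bool → ℝ, ∑ lam : Fin k → Bool, G (lam i0)
            = 2 ^ (k - 1) * (G true + G false) := by
          intro G
          have he := Fintype.sum_equiv (Equiv.funSplitAt i0 Bool)
            (fun lam : Fin k → Bool => G (lam i0))
            (fun p : Bool × ({i : Fin k // i ≠ i0} → Bool) => G p.1)
            (fun lam => rfl)
          rw [he, Fintype.sum_prod_type]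
          simp only [Finset.sum_const, Finset.card_univ, hcard, nsmul_eq_mul,
            Fintype.sum_bool]
          push_cast
          ring
        rw [hsum (fun b => F (s * (if b then (1 : ℝ) else -1)))]
        norm_num
    _ = (F s + F (-s)) / 2 := by
        have h2k : (2 : ℝ) ^ k = 2 ^ (k - 1) * 2 := by
          rw [← pow_succ]; congr 1; omega
        rw [h2k]
        have : (2 : ℝ) ^ (k - 1) ≠ 0 := by positivity
        field_simp
    _ = phat x d y := by
        rw [hphat]
        have hs : s = 1 ∨ s = -1 := by
          rw [hsdef]; by_cases h : j.1 % 2 = 0 <;> simp [h]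
        interval_cases d <;> interval_cases y <;>
          rcases hs with hs | hs <;> rw [hs] <;> simp [hFdef] <;> ring
end

section
/- Let $\hat P$ be a distribution with density $\hat p$ with respect to a base measure $\mu$ on a space $\mathcal{O}$ whose first coordinate is $z_1\in\mathcal{Z}_1$. Let $G$ be a signed measure with bounded density $g=dG/d\mu$, $G(\mathcal{O})=0$, such that $\hat P+tG$ is a feasible probability distribution for all $|t|\le r_G$. Let $\psi:\mathcal{Z}_1\to\mathbb{R}$ be bounded by $C_\psi$ with $\int\psi(z_1)\,dG=0$. Then the signed measure $G_\psi$ with density $\psi(z_1)g(o)$ satisfies: $\hat P+sG_\psi$ is a probability distribution for all $|s|\le C_\psi^{-1}r_G$, and for any nuisance functional $\gamma(z;P)$ that depends on $P$ only through the density slice $p(z_1,\cdot)$, one has $\gamma(z;\hat P+sG_\psi)=\gamma(z;\hat P+s\psi(z_1)G)$ for all $z=(z_1,z_2)$, and hence the directional derivative satisfies $\gamma_P'(z;\hat P)[G_\psi]=\psi(z_1)\,\gamma_P'(z;\hat P)[G]$. -/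
open MeasureTheory

/-- Bumped perturbations: multiplying a feasible perturbation density by a bounded
function `ψ(z₁)` of the first coordinate with `∫ ψ dG = 0` yields a feasible
perturbation; slice-dependent nuisances agree with the rescaled perturbation and
their directional derivatives rescale by `ψ(z₁)`. -/
theorem stmt_8 {Z1 Z2 : Type*} [MeasurableSpace Z1] [MeasurableSpace Z2]
    (μ : Measure (Z1 × Z2)) (phat g : Z1 × Z2 → ℝ)
    (hphatint : Integrable phat μ)
    (hgint : Integrable g μ)
    (Cψ rG : ℝ) (hCψ : 0 < Cψ) (hrG : 0 < rG)
    (Cg : ℝ) (hgbdd : ∀ o, |g o| ≤ Cg)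
    (hG0 : ∫ o, g o ∂μ = 0)
    (ψ : Z1 → ℝ) (hψbdd : ∀ z1, |ψ z1| ≤ Cψ)
    (hψint : Integrable (fun o => ψ o.1 * g o) μ)
    (hψG0 : ∫ o, ψ o.1 * g o ∂μ = 0)
    (hfeas : ∀ t : ℝ, |t| ≤ rG →
      (∀ o, 0 ≤ phat o + t * g o) ∧ ∫ o, (phat o + t * g o) ∂μ = 1)
    (γ : (Z1 × Z2 → ℝ) → Z1 × Z2 → ℝ)
    (hslice : ∀ (p q : Z1 × Z2 → ℝ) (z : Z1 × Z2),
      (∀ z2 : Z2, p (z.1, z2) = q (z.1, z2)) → γ p z = γ q z) :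
    (∀ s : ℝ, |s| ≤ Cψ⁻¹ * rG →
      (∀ o, 0 ≤ phat o + s * (ψ o.1 * g o))
      ∧ ∫ o, (phat o + s * (ψ o.1 * g o)) ∂μ = 1)
    ∧ (∀ (s : ℝ) (z : Z1 × Z2),
        γ (fun o => phat o + s * (ψ o.1 * g o)) z
          = γ (fun o => phat o + (s * ψ z.1) * g o) z)
    ∧ (∀ (z : Z1 × Z2) (L : ℝ),
        HasDerivAt (fun t => γ (fun o => phat o + t * g o) z) L 0 →
        HasDerivAt (fun t => γ (fun o => phat o + t * (ψ o.1 * g o)) z)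
          (ψ z.1 * L) 0) := by
  have hslice' : ∀ (s : ℝ) (z : Z1 × Z2),
      γ (fun o => phat o + s * (ψ o.1 * g o)) z
        = γ (fun o => phat o + (s * ψ z.1) * g o) z := by
    intro s z
    apply hslice
    intro z2
    simp only
    ring
  refine ⟨?_, hslice', ?_⟩
  · intro s hs
    constructor
    · intro o
      have h1 : |s * ψ o.1| ≤ rG := by
        have := hψbdd o.1
        calc |s * ψ o.1| = |s| * |ψ o.1| := abs_mul s _
          _ ≤ (Cψ⁻¹ * rG) * Cψ := by
              apply mul_le_mul hs this (abs_nonneg _)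
              positivity
          _ = rG := by field_simp
      have := (hfeas (s * ψ o.1) h1).1 o
      linarith [this, mul_assoc s (ψ o.1) (g o)]
    · have hint1 : ∫ o, phat o ∂μ = 1 := by
        have := (hfeas 0 (by simpa using le_of_lt hrG)).2
        simpa using this
      rw [integral_add hphatint (hψint.const_mul s)]
      rw [integral_const_mul, hψG0, hint1]
      ring
  · intro z L hL
    have key : (fun t => γ (fun o => phat o + t * (ψ o.1 * g o)) z)
        = (fun t => γ (fun o => phat o + t * g o) z) ∘ (fun t => t * ψ z.1) := by
      funext t
      exact hslice' t z
    rw [key]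
    have h2 : HasDerivAt (fun t : ℝ => t * ψ z.1) (ψ z.1) 0 := by
      simpa using (hasDerivAt_id (0:ℝ)).mul_const (ψ z.1)
    have hL' : HasDerivAt (fun t => γ (fun o => phat o + t * g o) z) L ((0:ℝ) * ψ z.1) := by
      simpa using hL
    have := hL'.comp 0 h2
    simpa [mul_comm] using this
end

section
/- Let $\hat p$ be a probability density on $\mathcal{X}\times\{0,1\}\times\{0,1\}$ (with respect to $\mu_\mathcal{X}\otimes$ counting measure) bounded between $l>0$ and $u<\infty$. Let $\varphi:\mathcal{X}\to\{-1,+1\}$ be measurable. Define the signed density $g_0(x,1,y)=\varphi(x)\hat p(x,1,y)$ and $g_0(x,0,y)=-\varphi(x)\hat p(x,1,\cdot)\frac{\hat p(x,0,y)}{\hat p(x,0,\cdot)}$, where $\hat p(x,d,\cdot)=\hat p(x,d,0)+\hat p(x,d,1)$. Then (i) $\int g_0\,d\mu=0$ and moreover $\sum_{d,y}g_0(x,d,y)=0$ for every $x$, so the $X$-marginal of $\hat P + tG_0$ equals that of $\hat P$; and (ii) for all sufficiently small $|t|$, the conditional expectation $\gamma(x,d;\hat P+tG_0):=\frac{(\hat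 p + t g_0)(x,d,1)}{(\hat p+t g_0)(x,d,\cdot)}$ equals $\gamma(x,d;\hat P)$ for all $(x,d)$. -/
open MeasureTheory

/-- The γ-invariant perturbation direction for the ATE: the signed density `g₀`
has zero total mass, leaves the `X`-marginal unchanged, and the outcome
regression `γ(x,d;·)` is exactly invariant along it for small `t`. -/
theorem stmt_10 {X : Type*} [MeasurableSpace X] (μX : Measure X)
    (phat : X → ℕ → ℕ → ℝ) (φ : X → ℝ) (l u : ℝ)
    (hl : 0 < l)
    (hpl : ∀ x d y, d ≤ 1 → y ≤ 1 → l ≤ phat x d y)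
    (hpu : ∀ x d y, d ≤ 1 → y ≤ 1 → phat x d y ≤ u)
    (hφ : ∀ x, φ x = 1 ∨ φ x = -1)
    (g0 : X → ℕ → ℕ → ℝ)
    (hg0a : ∀ x y, g0 x 1 y = φ x * phat x 1 y)
    (hg0b : ∀ x y, g0 x 0 y
      = -(φ x) * (phat x 1 0 + phat x 1 1) * phat x 0 y
          / (phat x 0 0 + phat x 0 1)) :
    ((∀ x, g0 x 0 0 + g0 x 0 1 + g0 x 1 0 + g0 x 1 1 = 0)
      ∧ ∫ x, (g0 x 0 0 + g0 x 0 1 + g0 x 1 0 + g0 x 1 1) ∂μX = 0)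
    ∧ ∃ t0 : ℝ, 0 < t0 ∧ ∀ t : ℝ, |t| ≤ t0 → ∀ (x : X) (d : ℕ), d ≤ 1 →
        (phat x d 1 + t * g0 x d 1)
            / ((phat x d 0 + t * g0 x d 0) + (phat x d 1 + t * g0 x d 1))
          = phat x d 1 / (phat x d 0 + phat x d 1) := by
  have hB : ∀ x, 0 < phat x 0 0 + phat x 0 1 := fun x => by
    have h0 := hpl x 0 0 (by norm_num) (by norm_num)
    have h1 := hpl x 0 1 (by norm_num) (by norm_num)
    linarith
  have hA : ∀ x, 0 < phat x 1 0 + phat x 1 1 := fun x => by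
    have h0 := hpl x 1 0 (by norm_num) (by norm_num)
    have h1 := hpl x 1 1 (by norm_num) (by norm_num)
    linarith
  have hzero : ∀ x, g0 x 0 0 + g0 x 0 1 + g0 x 1 0 + g0 x 1 1 = 0 := by
    intro x
    have hBne : phat x 0 0 + phat x 0 1 ≠ 0 := ne_of_gt (hB x)
    rw [hg0a, hg0a, hg0b, hg0b]
    field_simp
    ring
  set t0 := l / (2 * (|u| + 1)) with ht0def
  have ht0pos : 0 < t0 := div_pos hl (by positivity)
  refine ⟨⟨hzero, by simp [hzero]⟩, t0, ht0pos, ?_⟩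
  intro t ht x d hd
  have hlu : l ≤ u := le_trans (hpl x 0 0 (by norm_num) (by norm_num))
      (hpu x 0 0 (by norm_num) (by norm_num))
  have hu1 : u ≤ |u| + 1 := by
    have := le_abs_self u; linarith
  have ht0half : t0 ≤ 1 / 2 := by
    rw [ht0def, div_le_div_iff₀ (by positivity) (by norm_num)]
    nlinarith
  interval_cases d
  · -- d = 0
    have hBne : phat x 0 0 + phat x 0 1 ≠ 0 := ne_of_gt (hB x)
    set c : ℝ := -(φ x) * (phat x 1 0 + phat x 1 1) / (phat x 0 0 + phat x 0 1) with hc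
    have hcy : ∀ y, g0 x 0 y = c * phat x 0 y := by
      intro y; rw [hg0b, hc]; field_simp
    have hφ1 : |φ x| = 1 := by rcases hφ x with h | h <;> simp [h]
    have hcbound : |c| ≤ (|u| + 1) / l := by
      rw [hc, abs_div, abs_mul, abs_neg, hφ1, one_mul]
      rw [abs_of_pos (hA x), abs_of_pos (hB x)]
      rw [div_le_div_iff₀ (hB x) hl]
      have h10 := hpu x 1 0 (by norm_num) (by norm_num)
      have h11 := hpu x 1 1 (by norm_num) (by norm_num)
      have h00 := hpl x 0 0 (by norm_num) (by norm_num)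
      have h01 := hpl x 0 1 (by norm_num) (by norm_num)
      nlinarith
    have hs : 0 < 1 + t * c := by
      have h1 : |t * c| ≤ 1 / 2 := by
        rw [abs_mul]
        calc |t| * |c| ≤ t0 * ((|u| + 1) / l) := by
              apply mul_le_mul ht hcbound (abs_nonneg _) (le_of_lt ht0pos)
          _ = 1 / 2 := by
              rw [ht0def]; field_simp
      have := neg_abs_le (t * c)
      linarith
    have hnum : phat x 0 1 + t * g0 x 0 1 = (1 + t * c) * phat x 0 1 := by
      rw [hcy 1]; ring
    have hden : (phat x 0 0 + t * g0 x 0 0) + (phat x 0 1 + t * g0 x 0 1)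
        = (1 + t * c) * (phat x 0 0 + phat x 0 1) := by
      rw [hcy 0, hcy 1]; ring
    rw [hden, hnum, mul_div_mul_left _ _ (ne_of_gt hs)]
  · -- d = 1
    have hφ1 : |φ x| = 1 := by rcases hφ x with h | h <;> simp [h]
    have hs : 0 < 1 + t * φ x := by
      have h1 : |t * φ x| ≤ 1 / 2 := by
        rw [abs_mul, hφ1, mul_one]; exact le_trans ht ht0half
      have := neg_abs_le (t * φ x)
      linarith
    have hnum : phat x 1 1 + t * g0 x 1 1 = (1 + t * φ x) * phat x 1 1 := by
      rw [hg0a]; ring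
    have hden : (phat x 1 0 + t * g0 x 1 0) + (phat x 1 1 + t * g0 x 1 1)
        = (1 + t * φ x) * (phat x 1 0 + phat x 1 1) := by
      rw [hg0a, hg0a]; ring
    rw [hden, hnum, mul_div_mul_left _ _ (ne_of_gt hs)]
end

section
/- In the ATE setting with $\hat p$ bounded away from 0 and 1-slices as above, let $\varphi:\mathcal{X}\to\{-1,+1\}$, let $G_0$ have density $g_0$ as in the gamma-invariant construction, and let $G_1$ have density $g_1(x,1,1)=\varphi(x)\hat p(x,1,\cdot)$, $g_1(x,1,0)=-\varphi(x)\hat p(x,1,\cdot)$, $g_1(x,0,y)=0$. For small $s,t$ let $P_{s,t}=\hat P+sG_0+tG_1$. Then the ATE functional $\chi(P)=\mathbb{E}_{P_X}[g(1,X;P)-g(0,X;P)]$ satisfies $\chi(P_{s,t}) = \chi(\hat P) + t\int_{\mathcal{X}}\frac{\varphi(x)}{1+s\varphi(x)}\,d\hat P_X(x)$, and consequently the mixed second derivative is $\frac{\partial^2}{\partial s\,\partial t}\chi(P_{s,t})\big|_{s=t=0} = -\int\varphi(x)^2\,d\hat P_X(x) = -1$. -/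
open MeasureTheory

/-! Along `G₀` the treated cells at `x` are multiplied by `1 + sφ(x)` and the control cells by a
common factor; along `G₁` the treated total is unchanged while its outcome-one cell gains `tφ(x)`
times that total. So the control regression never moves and the treated one becomes
`ĝ(1,x) + tφ(x)/(1 + sφ(x))`. Hence `χ(P_{s,t}) - χ(P̂)` is exactly linear in `t`, and since
`φ² = 1` the slope is the rational function `(∫ φ dP̂_X - s)/(1 - s²)`, whose derivative at `0`
is `-1 = -∫ φ² dP̂_X`. -/

/-- `p d y` is the mass of the cell `(D, Y) = (d, y)` at a fixed covariate value. -/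
noncomputable def outcomeRegression (p : ℕ → ℕ → ℝ) (d : ℕ) : ℝ := p d 1 / (p d 0 + p d 1)

/-- `pX` stands for the density of the `X`-marginal with respect to `μ`. -/
noncomputable def ate {X : Type*} [MeasurableSpace X] (μ : Measure X) (pX : X → ℝ)
    (p : X → ℕ → ℕ → ℝ) : ℝ :=
  ∫ x, (outcomeRegression (p x) 1 - outcomeRegression (p x) 0) * pX x ∂μ

section Pointwise

variable {p g0 g1 : ℕ → ℕ → ℝ} {φ s t : ℝ}

theorem outcomeRegression_mem_Icc (d : ℕ) (h0 : 0 ≤ p d 0) (h1 : 0 ≤ p d 1) :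
    outcomeRegression p d ∈ Set.Icc 0 1 :=
  ⟨div_nonneg h1 (add_nonneg h0 h1),
    div_le_one_of_le₀ (le_add_of_nonneg_left h0) (add_nonneg h0 h1)⟩

theorem outcomeRegression_perturb_one (hg0 : ∀ y, g0 1 y = φ * p 1 y)
    (hg1₁ : g1 1 1 = φ * (p 1 0 + p 1 1)) (hg1₀ : g1 1 0 = -φ * (p 1 0 + p 1 1))
    (hp : p 1 0 + p 1 1 ≠ 0) (hs : 1 + s * φ ≠ 0) :
    outcomeRegression (p + s • g0 + t • g1) 1 = outcomeRegression p 1 + t * (φ / (1 + s * φ)) := by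
  simp only [outcomeRegression, Pi.add_apply, Pi.smul_apply, smul_eq_mul, hg0, hg1₁, hg1₀]
  rw [show p 1 0 + s * (φ * p 1 0) + t * (-φ * (p 1 0 + p 1 1))
      + (p 1 1 + s * (φ * p 1 1) + t * (φ * (p 1 0 + p 1 1)))
      = (1 + s * φ) * (p 1 0 + p 1 1) by ring]
  field_simp

theorem outcomeRegression_perturb_zero
    (hg0 : ∀ y, g0 0 y = -φ * (p 1 0 + p 1 1) * p 0 y / (p 0 0 + p 0 1))
    (hg1 : ∀ y, g1 0 y = 0) (hp : p 0 0 + p 0 1 ≠ 0)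
    (hs : p 0 0 + p 0 1 - s * φ * (p 1 0 + p 1 1) ≠ 0) :
    outcomeRegression (p + s • g0 + t • g1) 0 = outcomeRegression p 0 := by
  set k := (p 0 0 + p 0 1 - s * φ * (p 1 0 + p 1 1)) / (p 0 0 + p 0 1) with hk_def
  have hk : k ≠ 0 := div_ne_zero hs hp
  have hcell : ∀ y, p 0 y + s * g0 0 y + t * g1 0 y = p 0 y * k := fun y => by
    rw [hg0, hg1, hk_def]
    field_simp
    ring
  simp only [outcomeRegression, Pi.add_apply, Pi.smul_apply, smul_eq_mul, hcell, ← add_mul]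
  exact mul_div_mul_right _ _ hk

theorem div_one_add_mul_eq (hφ : φ ^ 2 = 1) (hs : s ^ 2 ≠ 1) :
    φ / (1 + s * φ) = (φ - s) / (1 - s ^ 2) := by
  have hden : 1 + s * φ ≠ 0 := by
    intro h
    apply hs
    linear_combination (-(1 - s * φ)) * h - s ^ 2 * hφ
  rw [div_eq_div_iff hden (sub_ne_zero.mpr (Ne.symm hs))]
  linear_combination (-s) * hφ

end Pointwise

section Integral

variable {X : Type*} [MeasurableSpace X] {μ : Measure X} {φ w : X → ℝ}

theorem integral_div_one_add_mul (hφ : ∀ x, φ x ^ 2 = 1)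
    (hφw : Integrable (fun x => φ x * w x) μ) (hw : Integrable w μ) {s : ℝ} (hs : s ^ 2 ≠ 1) :
    ∫ x, φ x / (1 + s * φ x) * w x ∂μ = ((∫ x, φ x * w x ∂μ) - s * ∫ x, w x ∂μ) / (1 - s ^ 2) := by
  have hpt : (fun x => φ x / (1 + s * φ x) * w x)
      = fun x => (φ x * w x - s * w x) / (1 - s ^ 2) := by
    funext x
    rw [div_one_add_mul_eq (hφ x) hs]
    ring
  rw [hpt, integral_div, integral_sub hφw (hw.const_mul s), integral_const_mul]

theorem hasDerivAt_integral_div_one_add_mul (hφ : ∀ x, φ x ^ 2 = 1)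
    (hφw : Integrable (fun x => φ x * w x) μ) (hw : Integrable w μ) :
    HasDerivAt (fun s => ∫ x, φ x / (1 + s * φ x) * w x ∂μ) (-∫ x, φ x ^ 2 * w x ∂μ) 0 := by
  set A := ∫ x, φ x * w x ∂μ
  set B := ∫ x, w x ∂μ
  have hclosed : HasDerivAt (fun s : ℝ => (A - s * B) / (1 - s ^ 2)) (-B) 0 := by
    have hnum : HasDerivAt (fun s : ℝ => A - s * B) (-B) 0 := by
      simpa using ((hasDerivAt_id (0 : ℝ)).mul_const B).const_sub A
    have hden : HasDerivAt (fun s : ℝ => 1 - s ^ 2) 0 0 := by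
      simpa using (hasDerivAt_pow 2 (0 : ℝ)).const_sub 1
    exact (hnum.div hden (by norm_num)).congr_deriv (by simp)
  have hnear : ∀ᶠ s in nhds (0 : ℝ), s ^ 2 ≠ 1 :=
    (continuous_pow 2).continuousAt.eventually_ne (by norm_num)
  have hB : ∫ x, φ x ^ 2 * w x ∂μ = B := by simp only [hφ, one_mul, B]
  rw [hB]
  refine hclosed.congr_of_eventuallyEq ?_
  filter_upwards [hnear] with s hs
  exact integral_div_one_add_mul hφ hφw hw hs

end Integral

theorem hasDerivAt_deriv_of_eq_add_mul {f : ℝ → ℝ → ℝ} {c k : ℝ → ℝ} {k' r : ℝ} (hr : 0 < r)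
    (hf : ∀ s t, |s| ≤ r → f s t = c s + t * k s) (hk : HasDerivAt k k' 0) :
    HasDerivAt (fun s => deriv (f s) 0) k' 0 := by
  refine hk.congr_of_eventuallyEq ?_
  filter_upwards [Metric.closedBall_mem_nhds (0 : ℝ) hr] with s hs
  rw [Metric.mem_closedBall, Real.dist_eq, sub_zero] at hs
  have hfs : f s = fun t => c s + t * k s := funext fun t => hf s t hs
  rw [hfs]
  simp

section Expansion

variable {X : Type*} [MeasurableSpace X] {μ : Measure X} {pX : X → ℝ}
  {phat g0 g1 : X → ℕ → ℕ → ℝ} {φ : X → ℝ} {l u : ℝ}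

theorem integrable_ate_integrand (hp : ∀ x d y, d ≤ 1 → y ≤ 1 → 0 ≤ phat x d y)
    (hpmeas : ∀ d y, Measurable fun x => phat x d y) (hpX : Integrable pX μ) :
    Integrable (fun x => (outcomeRegression (phat x) 1 - outcomeRegression (phat x) 0) * pX x)
      μ := by
  have hmeas : ∀ d, Measurable fun x => outcomeRegression (phat x) d := fun d =>
    (hpmeas d 1).div ((hpmeas d 0).add (hpmeas d 1))
  refine hpX.bdd_mul (c := 1) ((hmeas 1).sub (hmeas 0)).aestronglyMeasurable
    (ae_of_all _ fun x => ?_)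
  obtain ⟨h1₀, h1₁⟩ := outcomeRegression_mem_Icc 1 (hp x 1 0 le_rfl zero_le_one)
    (hp x 1 1 le_rfl le_rfl)
  obtain ⟨h0₀, h0₁⟩ := outcomeRegression_mem_Icc 0 (hp x 0 0 zero_le_one zero_le_one)
    (hp x 0 1 zero_le_one le_rfl)
  exact abs_sub_le_of_nonneg_of_le h1₀ h1₁ h0₀ h0₁

theorem integrable_div_one_add_mul (hφ : ∀ x, |φ x| ≤ 1) (hφmeas : Measurable φ)
    (hpX : Integrable pX μ) {s : ℝ} (hs : |s| ≤ 1 / 2) :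
    Integrable (fun x => φ x / (1 + s * φ x) * pX x) μ := by
  refine hpX.bdd_mul (c := 2)
    (hφmeas.div (measurable_const.add (measurable_const.mul hφmeas))).aestronglyMeasurable
    (ae_of_all _ fun x => ?_)
  have hsφ : |s * φ x| ≤ 1 / 2 := by
    rw [abs_mul]
    exact (mul_le_of_le_one_right (abs_nonneg s) (hφ x)).trans hs
  have hden : 1 / 2 ≤ 1 + s * φ x := by linarith [neg_abs_le (s * φ x)]
  rw [Real.norm_eq_abs, abs_div, abs_of_pos (show 0 < 1 + s * φ x by linarith),
    div_le_iff₀ (by linarith)]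
  linarith [hφ x]

theorem ate_perturb_eq (hl : 0 < l) (hlu : l ≤ u)
    (hpl : ∀ x d y, d ≤ 1 → y ≤ 1 → l ≤ phat x d y)
    (hpu : ∀ x d y, d ≤ 1 → y ≤ 1 → phat x d y ≤ u)
    (hφ : ∀ x, |φ x| ≤ 1) (hφmeas : Measurable φ)
    (hpmeas : ∀ d y, Measurable fun x => phat x d y)
    (hg0a : ∀ x y, g0 x 1 y = φ x * phat x 1 y)
    (hg0b : ∀ x y, g0 x 0 y
      = -(φ x) * (phat x 1 0 + phat x 1 1) * phat x 0 y / (phat x 0 0 + phat x 0 1))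
    (hg1a : ∀ x, g1 x 1 1 = φ x * (phat x 1 0 + phat x 1 1))
    (hg1b : ∀ x, g1 x 1 0 = -(φ x) * (phat x 1 0 + phat x 1 1))
    (hg1c : ∀ x y, g1 x 0 y = 0) (hpX : Integrable pX μ) {s : ℝ} (hs : |s| ≤ l / (2 * u))
    (t : ℝ) :
    ate μ pX (phat + s • g0 + t • g1) = ate μ pX phat + t * ∫ x, φ x / (1 + s * φ x) * pX x ∂μ := by
  have hu : 0 < u := hl.trans_le hlu
  have hs_half : |s| ≤ 1 / 2 :=
    hs.trans (by rw [div_le_div_iff₀ (by positivity) (by positivity)]; linarith)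
  have hsφ : ∀ x, |s * φ x| ≤ |s| := fun x => by
    rw [abs_mul]
    exact mul_le_of_le_one_right (abs_nonneg s) (hφ x)
  have htreated : ∀ x, 0 < 1 + s * φ x := fun x => by
    linarith [neg_abs_le (s * φ x), hsφ x]
  -- `|s| ≤ l / (2u)` keeps the shift `s φ (p̂₁₀ + p̂₁₁) ≤ l` below the control mass `≥ 2l`
  have hcontrol : ∀ x, 0 < phat x 0 0 + phat x 0 1 - s * φ x * (phat x 1 0 + phat x 1 1) := by
    intro x
    have hP1 : 0 ≤ phat x 1 0 + phat x 1 1 := by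
      linarith [hpl x 1 0 le_rfl zero_le_one, hpl x 1 1 le_rfl le_rfl]
    have hshift : s * φ x * (phat x 1 0 + phat x 1 1) ≤ l :=
      calc s * φ x * (phat x 1 0 + phat x 1 1)
          ≤ |s * φ x| * (phat x 1 0 + phat x 1 1) := mul_le_mul_of_nonneg_right (le_abs_self _) hP1
        _ ≤ l / (2 * u) * (2 * u) := mul_le_mul ((hsφ x).trans hs)
            (by linarith [hpu x 1 0 le_rfl zero_le_one, hpu x 1 1 le_rfl le_rfl]) hP1
            (by positivity)
        _ = l := by field_simp
    linarith [hpl x 0 0 zero_le_one zero_le_one, hpl x 0 1 zero_le_one le_rfl]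
  have hpos : ∀ x d y, d ≤ 1 → y ≤ 1 → 0 ≤ phat x d y := fun x d y hd hy =>
    hl.le.trans (hpl x d y hd hy)
  unfold ate
  rw [← integral_const_mul, ← integral_add (integrable_ate_integrand hpos hpmeas hpX)
    ((integrable_div_one_add_mul hφ hφmeas hpX hs_half).const_mul t)]
  refine integral_congr_ae (ae_of_all _ fun x => ?_)
  have hP1 : phat x 1 0 + phat x 1 1 ≠ 0 := by
    linarith [hpl x 1 0 le_rfl zero_le_one, hpl x 1 1 le_rfl le_rfl]
  have hP0 : phat x 0 0 + phat x 0 1 ≠ 0 := by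
    linarith [hpl x 0 0 zero_le_one zero_le_one, hpl x 0 1 zero_le_one le_rfl]
  simp only [Pi.add_apply, Pi.smul_apply]
  rw [outcomeRegression_perturb_one (hg0a x) (hg1a x) (hg1b x) hP1 (htreated x).ne',
    outcomeRegression_perturb_zero (hg0b x) (hg1c x) hP0 (hcontrol x).ne']
  ring

end Expansion

theorem stmt_11_general {X : Type*} [MeasurableSpace X] (μX : Measure X)
    (phat : X → ℕ → ℕ → ℝ) (φ : X → ℝ) (l u : ℝ)
    (hl : 0 < l)
    (hpl : ∀ x d y, d ≤ 1 → y ≤ 1 → l ≤ phat x d y)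
    (hpu : ∀ x d y, d ≤ 1 → y ≤ 1 → phat x d y ≤ u)
    (hφ : ∀ x, φ x = 1 ∨ φ x = -1)
    (hφmeas : Measurable φ)
    (hpmeas : ∀ d y, Measurable (fun x => phat x d y))
    (g0 g1 : X → ℕ → ℕ → ℝ)
    (hg0a : ∀ x y, g0 x 1 y = φ x * phat x 1 y)
    (hg0b : ∀ x y, g0 x 0 y
      = -(φ x) * (phat x 1 0 + phat x 1 1) * phat x 0 y
          / (phat x 0 0 + phat x 0 1))
    (hg1a : ∀ x, g1 x 1 1 = φ x * (phat x 1 0 + phat x 1 1))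
    (hg1b : ∀ x, g1 x 1 0 = -(φ x) * (phat x 1 0 + phat x 1 1))
    (hg1c : ∀ x y, g1 x 0 y = 0)
    (pX : X → ℝ)
    (hpXint : Integrable pX μX)
    (hprob : ∫ x, pX x ∂μX = 1)
    (χ : ℝ → ℝ → ℝ)
    (hχ : ∀ s t : ℝ, χ s t = ∫ x,
      ((phat x 1 1 + s * g0 x 1 1 + t * g1 x 1 1)
          / ((phat x 1 0 + s * g0 x 1 0 + t * g1 x 1 0)
              + (phat x 1 1 + s * g0 x 1 1 + t * g1 x 1 1))
        - (phat x 0 1 + s * g0 x 0 1 + t * g1 x 0 1)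
          / ((phat x 0 0 + s * g0 x 0 0 + t * g1 x 0 0)
              + (phat x 0 1 + s * g0 x 0 1 + t * g1 x 0 1)))
        * pX x ∂μX) :
    (∃ r : ℝ, 0 < r ∧ ∀ s t : ℝ, |s| ≤ r → |t| ≤ r →
      χ s t = χ 0 0 + t * ∫ x, φ x / (1 + s * φ x) * pX x ∂μX)
    ∧ HasDerivAt (fun s : ℝ => deriv (fun t : ℝ => χ s t) 0)
        (-∫ x, (φ x) ^ 2 * pX x ∂μX) 0
    ∧ ∫ x, (φ x) ^ 2 * pX x ∂μX = 1 := by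
  have hφsq : ∀ x, φ x ^ 2 = 1 := fun x => by rcases hφ x with h | h <;> simp [h]
  have hφabs : ∀ x, |φ x| ≤ 1 := fun x => (sq_le_one_iff_abs_le_one _).mp (hφsq x).le
  have hφint : Integrable (fun x => φ x * pX x) μX :=
    hpXint.bdd_mul (c := 1) hφmeas.aestronglyMeasurable (ae_of_all _ fun x => hφabs x)
  have hχate : ∀ s t, χ s t = ate μX pX (phat + s • g0 + t • g1) := hχ
  have hχ₀ : χ 0 0 = ate μX pX phat := by simpa using hχate 0 0
  -- `max u l`, not `u`: nothing forces `l ≤ u` when `X` is empty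
  set r := l / (2 * max u l)
  have hexp : ∀ s t, |s| ≤ r → χ s t = χ 0 0 + t * ∫ x, φ x / (1 + s * φ x) * pX x ∂μX :=
    fun s t hs => by
      rw [hχate, hχ₀]
      exact ate_perturb_eq hl (le_max_right u l) hpl
        (fun x d y hd hy => (hpu x d y hd hy).trans (le_max_left u l)) hφabs hφmeas hpmeas
        hg0a hg0b hg1a hg1b hg1c hpXint hs t
  refine ⟨⟨r, by positivity, fun s t hs _ => hexp s t hs⟩,
    hasDerivAt_deriv_of_eq_add_mul (by positivity) hexp
      (hasDerivAt_integral_div_one_add_mul hφsq hφint hpXint), ?_⟩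
  simpa [hφsq] using hprob

/-- Two-directional expansion of the ATE functional along the γ-invariant
direction `G₀` and the companion direction `G₁`, and the resulting mixed second
derivative `∂²χ/∂s∂t|₀ = -∫ φ² dP̂_X = -1`. -/
theorem stmt_11 {X : Type*} [MeasurableSpace X] (μX : Measure X)
    (phat : X → ℕ → ℕ → ℝ) (φ : X → ℝ) (l u : ℝ)
    (hl : 0 < l)
    (hpl : ∀ x d y, d ≤ 1 → y ≤ 1 → l ≤ phat x d y)
    (hpu : ∀ x d y, d ≤ 1 → y ≤ 1 → phat x d y ≤ u)
    (hφ : ∀ x, φ x = 1 ∨ φ x = -1)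
    (hφmeas : Measurable φ)
    (hpmeas : ∀ d y, Measurable (fun x => phat x d y))
    (g0 g1 : X → ℕ → ℕ → ℝ)
    (hg0a : ∀ x y, g0 x 1 y = φ x * phat x 1 y)
    (hg0b : ∀ x y, g0 x 0 y
      = -(φ x) * (phat x 1 0 + phat x 1 1) * phat x 0 y
          / (phat x 0 0 + phat x 0 1))
    (hg1a : ∀ x, g1 x 1 1 = φ x * (phat x 1 0 + phat x 1 1))
    (hg1b : ∀ x, g1 x 1 0 = -(φ x) * (phat x 1 0 + phat x 1 1))
    (hg1c : ∀ x y, g1 x 0 y = 0)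
    (pX : X → ℝ)
    (hpX : ∀ x, pX x = phat x 0 0 + phat x 0 1 + phat x 1 0 + phat x 1 1)
    (hpXint : Integrable pX μX)
    (hprob : ∫ x, pX x ∂μX = 1)
    (χ : ℝ → ℝ → ℝ)
    (hχ : ∀ s t : ℝ, χ s t = ∫ x,
      ((phat x 1 1 + s * g0 x 1 1 + t * g1 x 1 1)
          / ((phat x 1 0 + s * g0 x 1 0 + t * g1 x 1 0)
              + (phat x 1 1 + s * g0 x 1 1 + t * g1 x 1 1))
        - (phat x 0 1 + s * g0 x 0 1 + t * g1 x 0 1)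
          / ((phat x 0 0 + s * g0 x 0 0 + t * g1 x 0 0)
              + (phat x 0 1 + s * g0 x 0 1 + t * g1 x 0 1)))
        * pX x ∂μX) :
    (∃ r : ℝ, 0 < r ∧ ∀ s t : ℝ, |s| ≤ r → |t| ≤ r →
      χ s t = χ 0 0 + t * ∫ x, φ x / (1 + s * φ x) * pX x ∂μX)
    ∧ HasDerivAt (fun s : ℝ => deriv (fun t : ℝ => χ s t) 0)
        (-∫ x, (φ x) ^ 2 * pX x ∂μX) 0
    ∧ ∫ x, (φ x) ^ 2 * pX x ∂μX = 1 :=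
  stmt_11_general μX phat φ l u hl hpl hpu hφ hφmeas hpmeas g0 g1 hg0a hg0b hg1a hg1b hg1c pX hpXint
    hprob χ hχ
end

section
/- Let $p$ be a $C^2$ density on $[0,1]$ with $p\ge l_p>0$ and unique $q$-quantile $y_q$. Fix $0<r_\ell<y_q<r_u<1$, define $\lambda(y)=\frac{p(y)-p(y_q)}{\int_{y_q}^y p(z)\,dz}$ for $y\ne y_q$ (with $\lambda(y_q)=p'(y_q)/p(y_q)$), $D(y)=\exp(\int_{y_q}^y\lambda(s)\,ds)$, and $\delta(y)=D'(y)=\lambda(y)D(y)$ on $[r_\ell,r_u]$. Let $\bar\delta$ be any $C^2$ extension of $\delta$ to $[0,1]$ with $\int_0^{r_\ell}\bar\delta(u)\,du=D(r_\ell)$ and $\int_0^1\bar\delta(u)\,du=0$, and let $y_{\eta,q}$ denote the $q$-quantile of $p+\eta\bar\delta$. If $y_{\eta,q}\in[r_\ell,r_u]$, then $p(y_{\eta,q})+\eta\bar\delta(y_{\eta,q})=p(y_q)$. -/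
/-!
On `[r_ℓ, r_u]` the perturbation `δ̄ = λ D` is the derivative of `D = exp (∫_{y_q} λ)`, so
the normalisation `∫₀^{r_ℓ} δ̄ = D r_ℓ` gives `∫₀^y δ̄ = D y` there. Since `∫₀¹ δ̄ = 0`, the
two quantile equations combine to `∫_{y_q}^{y_{η,q}} p = -η D(y_{η,q})`, and `λ` is built
precisely so that `(p y - p y_q) / ∫_{y_q}^y p = λ y`. Substituting and cancelling `D > 0`
gives the claim. The only analytic subtlety is that `λ` is continuous at `y_q`, where it is
a ratio of slopes.
-/

open MeasureTheory intervalIntegral Set Filter Topology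

theorem tendsto_sub_div_of_hasDerivAt {f g : ℝ → ℝ} {f' g' a : ℝ}
    (hf : HasDerivAt f f' a) (hg : HasDerivAt g g' a) (hga : g a = 0) (hg' : g' ≠ 0) :
    Tendsto (fun y => (f y - f a) / g y) (𝓝[≠] a) (𝓝 (f' / g')) := by
  refine ((hasDerivAt_iff_tendsto_slope.mp hf).div
    (hasDerivAt_iff_tendsto_slope.mp hg) hg').congr' ?_
  filter_upwards [self_mem_nhdsWithin] with y (hy : y ≠ a)
  rw [Pi.div_apply, slope_def_field, slope_def_field, hga, sub_zero,
    div_div_div_cancel_right₀ (sub_ne_zero.mpr hy)]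

section PositiveDensity

variable {p lam : ℝ → ℝ} {a b c x : ℝ}

theorem integral_ne_zero_of_pos_on (hp : ContinuousOn p (Icc a b))
    (hpos : ∀ y ∈ Icc a b, 0 < p y) {y : ℝ} (hx : x ∈ Icc a b) (hy : y ∈ Icc a b)
    (hxy : x ≠ y) : ∫ z in x..y, p z ≠ 0 := by
  have hpos' : ∀ {u v}, u ∈ Icc a b → v ∈ Icc a b → u < v → 0 < ∫ z in u..v, p z :=
    fun hu hv huv => intervalIntegral_pos_of_pos_on
      (hp.mono (uIcc_subset_Icc hu hv)).intervalIntegrable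
      (fun z hz => hpos z ⟨hu.1.trans hz.1.le, hz.2.le.trans hv.2⟩) huv
  rcases hxy.lt_or_gt with h | h
  · exact (hpos' hx hy h).ne'
  · rw [integral_symm]
    exact neg_ne_zero.mpr (hpos' hy hx h).ne'

theorem hasDerivAt_integral_of_continuousOn (hp : ContinuousOn p (Icc a b))
    (hc : c ∈ Icc a b) (hx : x ∈ Ioo a b) :
    HasDerivAt (fun y => ∫ z in c..y, p z) (p x) x :=
  integral_hasDerivAt_right
    (hp.mono (uIcc_subset_Icc hc (Ioo_subset_Icc_self hx))).intervalIntegrable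
    ((hp.mono Ioo_subset_Icc_self).stronglyMeasurableAtFilter isOpen_Ioo x hx)
    (hp.continuousAt (Icc_mem_nhds hx.1 hx.2))

theorem continuousOn_of_eq_sub_div_integral (hp : ContinuousOn p (Icc a b))
    (hpos : ∀ y ∈ Icc a b, 0 < p y) (hc : c ∈ Ioo a b) (hpc : DifferentiableAt ℝ p c)
    (hlam : ∀ y ∈ Icc a b, y ≠ c → lam y = (p y - p c) / ∫ z in c..y, p z)
    (hlamc : lam c = deriv p c / p c) : ContinuousOn lam (Ioo a b) := by
  intro x hx
  refine ContinuousAt.continuousWithinAt ?_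
  have hc' := Ioo_subset_Icc_self hc
  rcases eq_or_ne x c with rfl | hxc
  · rw [continuousAt_iff_punctured_nhds, hlamc]
    refine (tendsto_sub_div_of_hasDerivAt hpc.hasDerivAt
      (hasDerivAt_integral_of_continuousOn hp hc' hc) integral_same
      (hpos x hc').ne').congr' ?_
    filter_upwards [nhdsWithin_le_nhds (Icc_mem_nhds hc.1 hc.2), self_mem_nhdsWithin]
      with y hy (hyx : y ≠ x)
    exact (hlam y hy hyx).symm
  · have hratio : ContinuousAt (fun y => (p y - p c) / ∫ z in c..y, p z) x :=
      ((hp.continuousAt (Icc_mem_nhds hx.1 hx.2)).sub continuousAt_const).div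
        (hasDerivAt_integral_of_continuousOn hp hc' hx).continuousAt
        (integral_ne_zero_of_pos_on hp hpos hc' (Ioo_subset_Icc_self hx) hxc.symm)
    refine hratio.congr ?_
    filter_upwards [Icc_mem_nhds hx.1 hx.2, compl_singleton_mem_nhds hxc] with y hy hyc
    exact (hlam y hy hyc).symm

theorem add_mul_eq_of_integral_eq_neg_mul (hp : ContinuousOn p (Icc a b))
    (hpos : ∀ y ∈ Icc a b, 0 < p y) (hc : c ∈ Icc a b)
    (hlam : ∀ y ∈ Icc a b, y ≠ c → lam y = (p y - p c) / ∫ z in c..y, p z)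
    {y d η : ℝ} (hy : y ∈ Icc a b) (hd : 0 < d) (hyη : ∫ z in c..y, p z = -(η * d)) :
    p y + η * (lam y * d) = p c := by
  rcases eq_or_ne y c with rfl | hyc
  · have hη : η = 0 := by simpa [hd.ne'] using hyη
    simp [hη]
  · have hη := integral_ne_zero_of_pos_on hp hpos hc hy hyc.symm
    rw [hyη, neg_ne_zero] at hη
    rw [hlam y hy hyc, hyη]
    field_simp [left_ne_zero_of_mul hη]
    ring

end PositiveDensity

theorem hasDerivAt_exp_integral {lam D : ℝ → ℝ} {a b c x : ℝ}
    (hlam : ContinuousOn lam (Ioo a b)) (hc : c ∈ Ioo a b)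
    (hD : ∀ y ∈ Ioo a b, D y = Real.exp (∫ s in c..y, lam s)) (hx : x ∈ Ioo a b) :
    HasDerivAt D (lam x * D x) x := by
  have hF : HasDerivAt (fun y => ∫ s in c..y, lam s) (lam x) x :=
    integral_hasDerivAt_right
      (hlam.mono (ordConnected_Ioo.uIcc_subset hc hx)).intervalIntegrable
      (hlam.stronglyMeasurableAtFilter isOpen_Ioo x hx)
      (hlam.continuousAt (Ioo_mem_nhds hx.1 hx.2))
  rw [hD x hx, mul_comm]
  exact hF.exp.congr_of_eventuallyEq
    (eventually_of_mem (Ioo_mem_nhds hx.1 hx.2) hD)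

theorem integral_eq_of_hasDerivAt_of_integral_eq {f F : ℝ → ℝ} {a r y : ℝ}
    (hfa : IntervalIntegrable f volume a r) (hfr : IntervalIntegrable f volume r y)
    (har : ∫ u in a..r, f u = F r) (hF : ∀ x ∈ uIcc r y, HasDerivAt F (f x) x) :
    ∫ u in a..y, f u = F y := by
  rw [← integral_add_adjacent_intervals hfa hfr, har, integral_eq_sub_of_hasDerivAt hF hfr]
  ring

theorem integral_between_quantiles {p δ : ℝ → ℝ} {a b c y q η : ℝ}
    (hp : IntervalIntegrable p volume a b) (hδ : IntervalIntegrable δ volume a b)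
    (hc : c ∈ Icc a b) (hy : y ∈ Icc a b) (hδ0 : ∫ u in a..b, δ u = 0)
    (hcq : ∫ u in a..c, p u = q * ∫ u in a..b, p u)
    (hyq : ∫ u in a..y, (p u + η * δ u) = q * ∫ u in a..b, (p u + η * δ u)) :
    ∫ u in c..y, p u = -(η * ∫ u in a..y, δ u) := by
  have hsub : ∀ {z}, z ∈ Icc a b → uIcc a z ⊆ uIcc a b :=
    fun hz => uIcc_subset_uIcc_left (Icc_subset_uIcc hz)
  have hpy := hp.mono_set (hsub hy)
  rw [integral_add hp (hδ.const_mul η), intervalIntegral.integral_const_mul, hδ0,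
    integral_add hpy ((hδ.mono_set (hsub hy)).const_mul η),
    intervalIntegral.integral_const_mul] at hyq
  rw [← integral_interval_sub_left hpy (hp.mono_set (hsub hc))]
  linarith

theorem stmt_15_general (p : ℝ → ℝ) (lp q yq rl ru : ℝ)
    (hpC2 : ContDiffOn ℝ 2 p (Set.Icc 0 1))
    (hlp : 0 < lp) (hpl : ∀ y ∈ Set.Icc (0 : ℝ) 1, lp ≤ p y)
    (hrl : 0 < rl) (hrlyq : rl < yq) (hyqru : yq < ru) (hru : ru < 1)
    (hyq : ∫ u in (0 : ℝ)..yq, p u = q * ∫ u in (0 : ℝ)..1, p u)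
    (lam D δbar : ℝ → ℝ)
    (hlam : ∀ y ∈ Set.Icc (0 : ℝ) 1, y ≠ yq →
      lam y = (p y - p yq) / ∫ z in yq..y, p z)
    (hlamyq : lam yq = deriv p yq / p yq)
    (hD : ∀ y ∈ Set.Icc (0 : ℝ) 1, D y = Real.exp (∫ s in yq..y, lam s))
    (hδ : ∀ y ∈ Set.Icc rl ru, δbar y = lam y * D y)
    (hδC2 : ContDiffOn ℝ 2 δbar (Set.Icc 0 1))
    (hδint1 : ∫ u in (0 : ℝ)..rl, δbar u = D rl)
    (hδint0 : ∫ u in (0 : ℝ)..1, δbar u = 0)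
    (η yηq : ℝ)
    (hyηq : ∫ u in (0 : ℝ)..yηq, (p u + η * δbar u)
      = q * ∫ u in (0 : ℝ)..1, (p u + η * δbar u))
    (hmem : yηq ∈ Set.Icc rl ru) :
    p yηq + η * δbar yηq = p yq := by
  have hsub : Icc rl ru ⊆ Ioo (0 : ℝ) 1 := Icc_subset_Ioo hrl hru
  have hyq01 : yq ∈ Ioo (0 : ℝ) 1 := hsub ⟨hrlyq.le, hyqru.le⟩
  have hy01 : yηq ∈ Icc (0 : ℝ) 1 := Ioo_subset_Icc_self (hsub hmem)
  have hpos : ∀ y ∈ Icc (0 : ℝ) 1, 0 < p y := fun y hy => hlp.trans_le (hpl y hy)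
  have hpc := hpC2.continuousOn
  have hδc := hδC2.continuousOn
  have hI : uIcc rl yηq ⊆ Icc rl ru :=
    uIcc_subset_Icc (left_mem_Icc.mpr (hmem.1.trans hmem.2)) hmem
  have hD' : ∀ x ∈ Ioo (0 : ℝ) 1, HasDerivAt D (lam x * D x) x :=
    fun x => hasDerivAt_exp_integral
      (continuousOn_of_eq_sub_div_integral hpc hpos hyq01
        ((hpC2.contDiffAt (Icc_mem_nhds hyq01.1 hyq01.2)).differentiableAt two_ne_zero)
        hlam hlamyq)
      hyq01 (fun y hy => hD y (Ioo_subset_Icc_self hy))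
  have hint : ∫ u in (0 : ℝ)..yηq, δbar u = D yηq :=
    integral_eq_of_hasDerivAt_of_integral_eq
      ((hδc.mono (Icc_subset_Icc_right ((hrlyq.trans hyqru).trans hru).le)).intervalIntegrable_of_Icc
        hrl.le)
      (hδc.mono (hI.trans (hsub.trans Ioo_subset_Icc_self))).intervalIntegrable hδint1
      (fun x hx => hδ x (hI hx) ▸ hD' x (hsub (hI hx)))
  have hquant : ∫ u in yq..yηq, p u = -(η * D yηq) := hint ▸ integral_between_quantiles
    (hpc.intervalIntegrable_of_Icc zero_le_one) (hδc.intervalIntegrable_of_Icc zero_le_one)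
    (Ioo_subset_Icc_self hyq01) hy01 hδint0 hyq hyηq
  rw [hδ yηq hmem]
  exact add_mul_eq_of_integral_eq_neg_mul hpc hpos (Ioo_subset_Icc_self hyq01) hlam hy01
    (hD yηq hy01 ▸ Real.exp_pos _) hquant

/-- Perturbing a density while preserving the density at the moving quantile:
if the perturbed `q`-quantile stays in `[r_ℓ, r_u]`, then the perturbed density
evaluated at it equals the original density at the original quantile. -/
theorem stmt_15 (p : ℝ → ℝ) (lp q yq rl ru : ℝ)
    (hpC2 : ContDiffOn ℝ 2 p (Set.Icc 0 1))
    (hlp : 0 < lp) (hpl : ∀ y ∈ Set.Icc (0 : ℝ) 1, lp ≤ p y)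
    (hq0 : 0 < q) (hq1 : q < 1)
    (hrl : 0 < rl) (hrlyq : rl < yq) (hyqru : yq < ru) (hru : ru < 1)
    (hyq : ∫ u in (0 : ℝ)..yq, p u = q * ∫ u in (0 : ℝ)..1, p u)
    (huniq : ∀ y ∈ Set.Icc (0 : ℝ) 1,
      (∫ u in (0 : ℝ)..y, p u = q * ∫ u in (0 : ℝ)..1, p u) → y = yq)
    (lam D δbar : ℝ → ℝ)
    (hlam : ∀ y ∈ Set.Icc (0 : ℝ) 1, y ≠ yq →
      lam y = (p y - p yq) / ∫ z in yq..y, p z)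
    (hlamyq : lam yq = deriv p yq / p yq)
    (hD : ∀ y ∈ Set.Icc (0 : ℝ) 1, D y = Real.exp (∫ s in yq..y, lam s))
    (hδ : ∀ y ∈ Set.Icc rl ru, δbar y = lam y * D y)
    (hδC2 : ContDiffOn ℝ 2 δbar (Set.Icc 0 1))
    (hδint1 : ∫ u in (0 : ℝ)..rl, δbar u = D rl)
    (hδint0 : ∫ u in (0 : ℝ)..1, δbar u = 0)
    (η yηq : ℝ)
    (hyηq : ∫ u in (0 : ℝ)..yηq, (p u + η * δbar u)
      = q * ∫ u in (0 : ℝ)..1, (p u + η * δbar u))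
    (hmem : yηq ∈ Set.Icc rl ru) :
    p yηq + η * δbar yηq = p yq :=
  stmt_15_general p lp q yq rl ru hpC2 hlp hpl hrl hrlyq hyqru hru hyq lam D δbar hlam hlamyq hD hδ
    hδC2 hδint1 hδint0 η yηq hyηq hmem
end
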